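/- Let Θ_n=S_n≡Θ=ℝ^p and let 𝓜_n=(M_n,id) be a non-random Markov chain Monte Carlo procedure where M_n is the Markov measure generated by initial distribution μ_n and transition kernel K_n(x,dy)=A_n(x)R_n(x,dy)+(1−A_n(x))δ_x(dy), with R_n a probability transition kernel on Θ and A_n:Θ→(0,1) measurable. If (μ_n; n=1,2,…) is tight and sup_{x∈K}R_n(x,B_ε(x)^c)→0 as n→∞ for every compact set K⊂Θ and every ε>0, then (𝓜_n; n=1,2,…) is degenerate. -/

import Mathlib

open MeasureTheory ProbabilityTheory Filter
open scoped ENNReal Topology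

noncomputable section

/-- The bounded Lipschitz distance between two measures on a pseudometric space. -/
def blDist {α : Type*} [MeasurableSpace α] [PseudoMetricSpace α]
    (μ ν : Measure α) : ℝ :=
  ⨆ f : {f : α → ℝ // LipschitzWith 1 f ∧ ∀ x, |f x| ≤ 1},
    |∫ x, f.1 x ∂μ - ∫ x, f.1 x ∂ν|

/-- The empirical measure `m⁻¹ ∑_{i<m} δ_{s(i)}` of the first `m` terms of a sequence. -/
def empMeas {Θ : Type*} [MeasurableSpace Θ] (m : ℕ) (s : ℕ → Θ) : Measure Θ :=
  (m : ℝ≥0∞)⁻¹ • ∑ i ∈ Finset.range m, Measure.dirac (s i)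

/-- `M` is the Markov measure on the path space generated by the initial distribution `μ`
and the transition (kernel) `K`: the first coordinate has law `μ`, and the chain has the
Markov property with one-step transition `K`. -/
def IsMarkovMeasureF {S : Type*} [MeasurableSpace S] (M : Measure (ℕ → S))
    (μ : Measure S) (K : S → Measure S) : Prop :=
  M.map (fun s => s 0) = μ ∧
  ∀ (m : ℕ) (B : Set (Fin (m + 1) → S)), MeasurableSet B →
    ∀ (A : Set S), MeasurableSet A →
      M {s | (fun i : Fin (m + 1) => s i.1) ∈ B ∧ s (m + 1) ∈ A}
        = ∫⁻ s in {s | (fun i : Fin (m + 1) => s i.1) ∈ B}, K (s m) A ∂M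

/-- Tightness of a sequence of measures. -/
def TightSeq {α : Type*} [MeasurableSpace α] [TopologicalSpace α]
    (μ : ℕ → Measure α) : Prop :=
  ∀ ε : ℝ, 0 < ε → ∃ K : Set α, IsCompact K ∧ ∀ n, μ n Kᶜ ≤ ENNReal.ofReal ε

/-!
Testing the empirical measures against a 1-Lipschitz function bounded by 1 shows
`blDist (empMeas m s) (empMeas 1 s) ≤ ∑_{j < m-1} min (dist (s (j+1)) (s j)) 2`, so it suffices
that every single jump of the chain tends to `0` in probability. Since
`K_n(x, B_ε(x)ᶜ) ≤ R_n(x, B_ε(x)ᶜ)` (the rejected move stays at `x`), a jump of size `ε`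
started in a compact set `C` has vanishing probability: cover `C` by finitely many balls of
radius `ε/3` and apply the Markov property on each. Tightness then propagates along the chain:
outside an event of small probability, `s j` lies in the `j`-fold closed `1`-thickening of a
compact set that carries most of the initial distribution.
-/

open Metric

section EmpiricalMeasure

variable {Θ : Type*}

lemma abs_sub_le_min_dist [PseudoMetricSpace Θ] {f : Θ → ℝ} (hf : LipschitzWith 1 f)
    (hfb : ∀ x, |f x| ≤ 1) (x y : Θ) : |f x - f y| ≤ min (dist x y) 2 :=
  le_min (by simpa [Real.dist_eq] using hf.dist_le_mul x y)
    ((abs_sub (f x) (f y)).trans (by linarith [hfb x, hfb y]))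

lemma abs_sub_le_sum_min_dist [PseudoMetricSpace Θ] {f : Θ → ℝ} (hf : LipschitzWith 1 f)
    (hfb : ∀ x, |f x| ≤ 1) (s : ℕ → Θ) (i : ℕ) :
    |f (s i) - f (s 0)| ≤ ∑ j ∈ Finset.range i, min (dist (s (j + 1)) (s j)) 2 := by
  rw [← Finset.sum_range_sub (fun j => f (s j))]
  exact (Finset.abs_sum_le_sum_abs _ _).trans
    (Finset.sum_le_sum fun j _ => abs_sub_le_min_dist hf hfb _ _)

variable [MeasurableSpace Θ]

lemma integral_empMeas [MeasurableSingletonClass Θ] (m : ℕ) (s : ℕ → Θ) (f : Θ → ℝ) :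
    ∫ x, f x ∂(empMeas m s) = (m : ℝ)⁻¹ * ∑ i ∈ Finset.range m, f (s i) := by
  rw [empMeas, integral_smul_measure,
    integral_finsetSum_measure fun i _ => integrable_dirac enorm_lt_top]
  simp [integral_dirac, ENNReal.toReal_inv]

variable [PseudoMetricSpace Θ]

lemma blDist_nonneg (μ ν : Measure Θ) : 0 ≤ blDist μ ν :=
  Real.iSup_nonneg fun _ => abs_nonneg _

lemma blDist_empMeas_le [MeasurableSingletonClass Θ] {m : ℕ} (hm : 1 ≤ m) (s : ℕ → Θ) :
    blDist (empMeas m s) (empMeas 1 s)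
      ≤ ∑ j ∈ Finset.range (m - 1), min (dist (s (j + 1)) (s j)) 2 := by
  set B := ∑ j ∈ Finset.range (m - 1), min (dist (s (j + 1)) (s j)) 2
  have hB : 0 ≤ B := Finset.sum_nonneg fun j _ => le_min dist_nonneg zero_le_two
  refine Real.iSup_le (fun ⟨f, hf, hfb⟩ => ?_) hB
  have hdev : ∀ i ∈ Finset.range m, |f (s i) - f (s 0)| ≤ B := fun i hi =>
    (abs_sub_le_sum_min_dist hf hfb s i).trans <|
      Finset.sum_le_sum_of_subset_of_nonneg
        (Finset.range_subset_range.2 (by rw [Finset.mem_range] at hi; omega))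
        fun j _ _ => le_min dist_nonneg zero_le_two
  have hm0 : (m : ℝ) ≠ 0 := by positivity
  simp only [integral_empMeas]
  calc |(m : ℝ)⁻¹ * ∑ i ∈ Finset.range m, f (s i) - ((1 : ℕ) : ℝ)⁻¹ * ∑ i ∈ Finset.range 1, f (s i)|
      = |(m : ℝ)⁻¹ * ∑ i ∈ Finset.range m, (f (s i) - f (s 0))| := by
        rw [Finset.sum_sub_distrib, Finset.sum_const, Finset.card_range, nsmul_eq_mul, mul_sub,
          ← mul_assoc, inv_mul_cancel₀ hm0]
        simp
    _ = (m : ℝ)⁻¹ * |∑ i ∈ Finset.range m, (f (s i) - f (s 0))| := by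
        rw [abs_mul, abs_of_pos (by positivity)]
    _ ≤ (m : ℝ)⁻¹ * ∑ _i ∈ Finset.range m, B := by
        gcongr
        exact (Finset.abs_sum_le_sum_abs _ _).trans (Finset.sum_le_sum hdev)
    _ = B := by
        rw [Finset.sum_const, Finset.card_range, nsmul_eq_mul, ← mul_assoc, inv_mul_cancel₀ hm0,
          one_mul]

end EmpiricalMeasure

namespace IsMarkovMeasureF

variable {S : Type*} [MeasurableSpace S] {M : Measure (ℕ → S)} {μ : Measure S}
  {K : S → Measure S}

lemma isProbabilityMeasure (hM : IsMarkovMeasureF M μ K) [IsProbabilityMeasure μ] :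
    IsProbabilityMeasure M :=
  ⟨by rw [← Set.preimage_univ (f := fun s : ℕ → S => s 0),
    ← Measure.map_apply (measurable_pi_apply 0) .univ, hM.1, measure_univ]⟩

lemma measure_step (hM : IsMarkovMeasureF M μ K) (j : ℕ) {E A : Set S} (hE : MeasurableSet E)
    (hA : MeasurableSet A) :
    M {s | s j ∈ E ∧ s (j + 1) ∈ A} = ∫⁻ s in {s | s j ∈ E}, K (s j) A ∂M :=
  hM.2 j ((fun v : Fin (j + 1) → S => v (Fin.last j)) ⁻¹' E) (measurable_pi_apply _ hE) A hA

lemma measure_step_le (hM : IsMarkovMeasureF M μ K) [IsProbabilityMeasure μ] (j : ℕ)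
    {E A : Set S} (hE : MeasurableSet E) (hA : MeasurableSet A) {c : ℝ≥0∞}
    (hc : ∀ x ∈ E, K x A ≤ c) : M {s | s j ∈ E ∧ s (j + 1) ∈ A} ≤ c := by
  have := hM.isProbabilityMeasure
  rw [hM.measure_step j hE hA]
  calc ∫⁻ s in {s | s j ∈ E}, K (s j) A ∂M
      ≤ ∫⁻ _ in {s | s j ∈ E}, c ∂M :=
        setLIntegral_mono' (measurable_pi_apply j hE) fun s hs => hc (s j) hs
    _ = c * M {s | s j ∈ E} := setLIntegral_const _ _
    _ ≤ c := mul_le_of_le_one_right' prob_le_one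

variable [PseudoMetricSpace S] [OpensMeasurableSpace S]

lemma measure_step_far_le (hM : IsMarkovMeasureF M μ K) [IsProbabilityMeasure μ] (j : ℕ)
    {C : Set S} (hC : MeasurableSet C) (x : S) (r : ℝ) :
    M {s | s j ∈ C ∩ ball x r ∧ s (j + 1) ∈ (ball x (2 * r))ᶜ} ≤ ⨆ y ∈ C, K y (ball y r)ᶜ := by
  refine hM.measure_step_le j (hC.inter measurableSet_ball) measurableSet_ball.compl ?_
  rintro y ⟨hyC, hyx⟩
  calc K y (ball x (2 * r))ᶜ ≤ K y (ball y r)ᶜ :=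
        measure_mono (Set.compl_subset_compl.2 (ball_subset_ball' (by
          rw [mem_ball] at hyx; linarith)))
    _ ≤ ⨆ y ∈ C, K y (ball y r)ᶜ := le_biSup (fun y => K y (ball y r)ᶜ) hyC

end IsMarkovMeasureF

lemma IsCompact.exists_finset_separating_jumps {Θ : Type*} [PseudoMetricSpace Θ] {C : Set Θ}
    (hC : IsCompact C) {ε : ℝ} (hε : 0 < ε) :
    ∃ t : Finset Θ, ∀ y ∈ C, ∀ z, ε ≤ dist z y →
      ∃ x ∈ t, y ∈ ball x (ε / 3) ∧ z ∈ (ball x (2 * (ε / 3)))ᶜ := by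
  obtain ⟨t, ht⟩ := hC.elim_finite_subcover (fun x => ball x (ε / 3)) (fun _ => isOpen_ball)
    fun y _ => Set.mem_iUnion.2 ⟨y, mem_ball_self (by positivity)⟩
  refine ⟨t, fun y hy z hz => ?_⟩
  obtain ⟨x, hxt, hyx⟩ := Set.mem_iUnion₂.1 (ht hy)
  refine ⟨x, hxt, hyx, fun hzx => ?_⟩
  rw [mem_ball] at hyx hzx
  linarith [dist_triangle_right z y x]

section Jumps

variable {Θ : Type*} [MeasurableSpace Θ] [MetricSpace Θ] [OpensMeasurableSpace Θ]
  {M : ℕ → Measure (ℕ → Θ)} {μ : ℕ → Measure Θ} {K : ℕ → Θ → Measure Θ}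

lemma tendsto_measure_jump_of_isCompact (hM : ∀ n, IsMarkovMeasureF (M n) (μ n) (K n))
    (hμ : ∀ n, IsProbabilityMeasure (μ n))
    (hK : ∀ C : Set Θ, IsCompact C → ∀ ε : ℝ, 0 < ε →
      Tendsto (fun n => ⨆ x ∈ C, K n x (ball x ε)ᶜ) atTop (𝓝 0))
    {C : Set Θ} (hC : IsCompact C) {ε : ℝ} (hε : 0 < ε) (j : ℕ) :
    Tendsto (fun n => M n {s | s j ∈ C ∧ ε ≤ dist (s (j + 1)) (s j)}) atTop (𝓝 0) := by
  -- The Markov property only controls events `{s j ∈ E, s (j + 1) ∈ A}`; the finite cover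
  -- splits the jump event into finitely many of these.
  obtain ⟨t, ht⟩ := hC.exists_finset_separating_jumps hε
  have hbound : ∀ n, M n {s | s j ∈ C ∧ ε ≤ dist (s (j + 1)) (s j)}
      ≤ t.card * ⨆ x ∈ C, K n x (ball x (ε / 3))ᶜ := fun n =>
    calc M n {s | s j ∈ C ∧ ε ≤ dist (s (j + 1)) (s j)}
        ≤ M n (⋃ x ∈ t, {s | s j ∈ C ∩ ball x (ε / 3) ∧ s (j + 1) ∈ (ball x (2 * (ε / 3)))ᶜ}) :=
          measure_mono fun s ⟨hsC, hsε⟩ => by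
            obtain ⟨x, hxt, hsx, hsx'⟩ := ht _ hsC _ hsε
            exact Set.mem_biUnion hxt ⟨⟨hsC, hsx⟩, hsx'⟩
      _ ≤ ∑ x ∈ t, M n {s | s j ∈ C ∩ ball x (ε / 3) ∧ s (j + 1) ∈ (ball x (2 * (ε / 3)))ᶜ} :=
          measure_biUnion_finset_le _ _
      _ ≤ ∑ _x ∈ t, ⨆ x ∈ C, K n x (ball x (ε / 3))ᶜ :=
          Finset.sum_le_sum fun x _ =>
            have := hμ n; (hM n).measure_step_far_le j hC.measurableSet x _
      _ = t.card * ⨆ x ∈ C, K n x (ball x (ε / 3))ᶜ := by rw [Finset.sum_const, nsmul_eq_mul]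
  have hlim := ENNReal.Tendsto.const_mul (a := t.card) (hK C hC (ε / 3) (by positivity))
    (.inr (ENNReal.natCast_ne_top _))
  rw [mul_zero] at hlim
  exact tendsto_of_tendsto_of_tendsto_of_le_of_le tendsto_const_nhds hlim (fun _ => zero_le)
    hbound

lemma eventually_measure_notMem_or_jump_le (hM : ∀ n, IsMarkovMeasureF (M n) (μ n) (K n))
    (hμ : ∀ n, IsProbabilityMeasure (μ n))
    (hK : ∀ C : Set Θ, IsCompact C → ∀ ε : ℝ, 0 < ε →
      Tendsto (fun n => ⨆ x ∈ C, K n x (ball x ε)ᶜ) atTop (𝓝 0))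
    {C : Set Θ} (hC : IsCompact C) {ε : ℝ} (hε : 0 < ε) {j : ℕ} {δ : ℝ≥0∞} (hδ : 0 < δ)
    (hCδ : ∀ᶠ n in atTop, M n {s | s j ∉ C} ≤ δ / 2) :
    ∀ᶠ n in atTop, M n {s | s j ∉ C ∨ ε ≤ dist (s (j + 1)) (s j)} ≤ δ := by
  filter_upwards [hCδ, ENNReal.tendsto_nhds_zero.1
    (tendsto_measure_jump_of_isCompact hM hμ hK hC hε j) _ (ENNReal.half_pos hδ.ne')]
    with n hout hjump
  calc M n {s | s j ∉ C ∨ ε ≤ dist (s (j + 1)) (s j)}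
      ≤ M n ({s | s j ∉ C} ∪ {s | s j ∈ C ∧ ε ≤ dist (s (j + 1)) (s j)}) :=
        measure_mono fun s hs => by by_cases h : s j ∈ C <;> simp_all
    _ ≤ δ / 2 + δ / 2 := (measure_union_le _ _).trans (add_le_add hout hjump)
    _ = δ := ENNReal.add_halves δ

variable [ProperSpace Θ]

lemma exists_isCompact_eventually_measure_notMem_le
    (hM : ∀ n, IsMarkovMeasureF (M n) (μ n) (K n)) (hμ : ∀ n, IsProbabilityMeasure (μ n))
    (htight : TightSeq μ)
    (hK : ∀ C : Set Θ, IsCompact C → ∀ ε : ℝ, 0 < ε →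
      Tendsto (fun n => ⨆ x ∈ C, K n x (ball x ε)ᶜ) atTop (𝓝 0))
    (j : ℕ) {δ : ℝ≥0∞} (hδ : 0 < δ) :
    ∃ C : Set Θ, IsCompact C ∧ ∀ᶠ n in atTop, M n {s | s j ∉ C} ≤ δ := by
  induction j generalizing δ with
  | zero =>
    obtain ⟨r, -, hr, hrδ⟩ := ENNReal.lt_iff_exists_real_btwn.1 hδ
    obtain ⟨C, hC, hμC⟩ := htight r (ENNReal.ofReal_pos.1 hr)
    refine ⟨C, hC, .of_forall fun n => ?_⟩
    calc M n {s | s 0 ∉ C} = μ n Cᶜ := by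
          rw [← (hM n).1, Measure.map_apply (measurable_pi_apply 0) hC.measurableSet.compl]
          rfl
      _ ≤ δ := (hμC n).trans hrδ.le
  | succ j ih =>
    obtain ⟨C, hC, hCδ⟩ := ih (ENNReal.half_pos hδ.ne')
    refine ⟨cthickening 1 C, hC.cthickening, ?_⟩
    filter_upwards [eventually_measure_notMem_or_jump_le hM hμ hK hC one_pos hδ hCδ] with n hn
    refine (measure_mono fun s hs => (em (s j ∈ C)).elim (fun hsC => Or.inr ?_) Or.inl).trans hn
    exact le_of_not_gt fun hlt => hs (mem_cthickening_of_dist_le _ _ _ _ hsC hlt.le)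

lemma tendsto_measure_jump (hM : ∀ n, IsMarkovMeasureF (M n) (μ n) (K n))
    (hμ : ∀ n, IsProbabilityMeasure (μ n)) (htight : TightSeq μ)
    (hK : ∀ C : Set Θ, IsCompact C → ∀ ε : ℝ, 0 < ε →
      Tendsto (fun n => ⨆ x ∈ C, K n x (ball x ε)ᶜ) atTop (𝓝 0))
    (j : ℕ) {ε : ℝ} (hε : 0 < ε) :
    Tendsto (fun n => M n {s | ε ≤ dist (s (j + 1)) (s j)}) atTop (𝓝 0) := by
  refine ENNReal.tendsto_nhds_zero.2 fun δ hδ => ?_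
  obtain ⟨C, hC, hCδ⟩ :=
    exists_isCompact_eventually_measure_notMem_le hM hμ htight hK j (ENNReal.half_pos hδ.ne')
  filter_upwards [eventually_measure_notMem_or_jump_le hM hμ hK hC hε hδ hCδ] with n hn
  exact (measure_mono fun s hs => Or.inr hs).trans hn

end Jumps

section Truncation

variable {Ω : Type*} [MeasurableSpace Ω] {g : Ω → ℝ}

lemma integrable_min_const {P : Measure Ω} [IsFiniteMeasure P] (hg : Measurable g)
    (hg0 : ∀ ω, 0 ≤ g ω) {c : ℝ} (hc : 0 ≤ c) : Integrable (fun ω => min (g ω) c) P :=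
  .of_bound (hg.min measurable_const).aestronglyMeasurable c <| .of_forall fun ω => by
    rw [Real.norm_eq_abs, abs_of_nonneg (le_min (hg0 ω) hc)]
    exact min_le_right _ _

lemma integral_min_const_le {P : Measure Ω} [IsProbabilityMeasure P] (hg : Measurable g)
    (hg0 : ∀ ω, 0 ≤ g ω) {c : ℝ} (hc : 0 ≤ c) {ε : ℝ} (hε : 0 ≤ ε) :
    ∫ ω, min (g ω) c ∂P ≤ ε + P.real {ω | ε ≤ g ω} * c := by
  have hmeas : MeasurableSet {ω | ε ≤ g ω} := measurableSet_le measurable_const hg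
  have hind : Integrable ({ω | ε ≤ g ω}.indicator fun _ => c) P :=
    (integrable_const c).indicator hmeas
  have hpt : ∀ ω, min (g ω) c ≤ ε + {ω | ε ≤ g ω}.indicator (fun _ => c) ω := fun ω => by
    by_cases h : ε ≤ g ω
    · rw [Set.indicator_of_mem (show ω ∈ {ω | ε ≤ g ω} from h)]
      linarith [min_le_right (g ω) c]
    · rw [Set.indicator_of_notMem (show ω ∉ {ω | ε ≤ g ω} from h), add_zero]
      exact (min_le_left _ _).trans (not_le.1 h).le
  calc ∫ ω, min (g ω) c ∂P ≤ ∫ ω, (ε + {ω | ε ≤ g ω}.indicator (fun _ => c) ω) ∂P :=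
        integral_mono_of_nonneg (.of_forall fun ω => le_min (hg0 ω) hc)
          ((integrable_const ε).add hind) (.of_forall hpt)
    _ = ε + P.real {ω | ε ≤ g ω} * c := by
        rw [integral_add (integrable_const ε) hind, integral_const, integral_indicator_const _ hmeas]
        simp

lemma tendsto_integral_min_const {P : ℕ → Measure Ω} (hP : ∀ n, IsProbabilityMeasure (P n))
    (hg : Measurable g) (hg0 : ∀ ω, 0 ≤ g ω) {c : ℝ} (hc : 0 ≤ c)
    (hconv : ∀ ε : ℝ, 0 < ε → Tendsto (fun n => P n {ω | ε ≤ g ω}) atTop (𝓝 0)) :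
    Tendsto (fun n => ∫ ω, min (g ω) c ∂P n) atTop (𝓝 0) := by
  refine tendsto_order.2 ⟨fun a ha => .of_forall fun n =>
    ha.trans_le (integral_nonneg fun ω => le_min (hg0 ω) hc), fun a ha => ?_⟩
  have hreal : Tendsto (fun n => (P n).real {ω | a / 2 ≤ g ω} * c) atTop (𝓝 0) := by
    simpa [Measure.real] using ((ENNReal.tendsto_toReal ENNReal.zero_ne_top).comp
      (hconv (a / 2) (by positivity))).mul_const c
  filter_upwards [hreal.eventually_lt_const (half_pos ha)] with n hn
  have := hP n
  linarith [integral_min_const_le (P := P n) hg hg0 hc (half_pos ha).le]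

end Truncation

lemma smul_add_smul_dirac_apply_compl_ball_le {Θ : Type*} [MeasurableSpace Θ]
    [PseudoMetricSpace Θ] [OpensMeasurableSpace Θ] (ν : Measure Θ) {a : ℝ} (ha : a ≤ 1)
    (x : Θ) {ε : ℝ} (hε : 0 < ε) :
    (ENNReal.ofReal a • ν + ENNReal.ofReal (1 - a) • Measure.dirac x) (ball x ε)ᶜ
      ≤ ν (ball x ε)ᶜ := by
  have hx : Measure.dirac x (ball x ε)ᶜ = 0 := by
    rw [Measure.dirac_apply' _ measurableSet_ball.compl]
    simp [mem_ball_self hε]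
  rw [Measure.add_apply, Measure.smul_apply, Measure.smul_apply, hx, smul_zero, add_zero,
    smul_eq_mul]
  exact mul_le_of_le_one_left' (ENNReal.ofReal_le_one.2 ha)

theorem stmt2_general {p : ℕ}
    (μ : ℕ → Measure (EuclideanSpace ℝ (Fin p)))
    (hμ : ∀ n, IsProbabilityMeasure (μ n))
    (R : ℕ → Kernel (EuclideanSpace ℝ (Fin p)) (EuclideanSpace ℝ (Fin p)))
    (A : ℕ → EuclideanSpace ℝ (Fin p) → ℝ)
    (hA01 : ∀ n x, A n x ∈ Set.Ioo (0 : ℝ) 1)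
    (K : ℕ → Kernel (EuclideanSpace ℝ (Fin p)) (EuclideanSpace ℝ (Fin p)))
    (hKdef : ∀ n x, (K n) x
      = ENNReal.ofReal (A n x) • (R n) x
        + ENNReal.ofReal (1 - A n x) • Measure.dirac x)
    (M : ℕ → Measure (ℕ → EuclideanSpace ℝ (Fin p)))
    (hMarkov : ∀ n, IsMarkovMeasureF (M n) (μ n) (fun x => (K n) x))
    (htight : TightSeq μ)
    (hRsup : ∀ Kc : Set (EuclideanSpace ℝ (Fin p)), IsCompact Kc →
      ∀ ε : ℝ, 0 < ε →
        Tendsto (fun n => ⨆ x ∈ Kc, (R n) x (Metric.ball x ε)ᶜ) atTop (𝓝 (0 : ℝ≥0∞))) :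
    ∀ m : ℕ, 1 ≤ m →
      Tendsto (fun n => ∫ s, blDist (empMeas m s) (empMeas 1 s) ∂(M n))
        atTop (𝓝 0) := by
  intro m hm
  have hMprob n : IsProbabilityMeasure (M n) := have := hμ n; (hMarkov n).isProbabilityMeasure
  have hKsup C (hC : IsCompact C) ε (hε : 0 < ε) :
      Tendsto (fun n => ⨆ x ∈ C, (K n) x (ball x ε)ᶜ) atTop (𝓝 0) :=
    tendsto_of_tendsto_of_tendsto_of_le_of_le tendsto_const_nhds (hRsup C hC ε hε)
      (fun _ => zero_le) fun n => iSup₂_mono fun x _ => (hKdef n x).symm ▸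
        smul_add_smul_dirac_apply_compl_ball_le _ (hA01 n x).2.le x hε
  have hjump j : Measurable fun s : ℕ → EuclideanSpace ℝ (Fin p) => dist (s (j + 1)) (s j) :=
    (measurable_pi_apply _).dist (measurable_pi_apply _)
  have hstep j : Tendsto (fun n => ∫ s, min (dist (s (j + 1)) (s j)) 2 ∂(M n)) atTop (𝓝 0) :=
    tendsto_integral_min_const hMprob (hjump j) (fun _ => dist_nonneg) zero_le_two
      fun ε hε => tendsto_measure_jump hMarkov hμ htight hKsup j hε
  refine squeeze_zero (fun n => integral_nonneg fun s => blDist_nonneg _ _) (fun n => ?_)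
    (by simpa using tendsto_finsetSum (Finset.range (m - 1)) fun j _ => hstep j)
  have hint j : Integrable (fun s => min (dist (s (j + 1)) (s j)) 2) (M n) :=
    integrable_min_const (hjump j) (fun _ => dist_nonneg) zero_le_two
  calc ∫ s, blDist (empMeas m s) (empMeas 1 s) ∂(M n)
      ≤ ∫ s, ∑ j ∈ Finset.range (m - 1), min (dist (s (j + 1)) (s j)) 2 ∂(M n) :=
        integral_mono_of_nonneg (.of_forall fun s => blDist_nonneg _ _)
          (integrable_finsetSum _ fun j _ => hint j) (.of_forall (blDist_empMeas_le hm))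
    _ = ∑ j ∈ Finset.range (m - 1), ∫ s, min (dist (s (j + 1)) (s j)) 2 ∂(M n) :=
        integral_finsetSum _ fun j _ => hint j

/-- Let `Θ = ℝ^p` and let `𝓜_n = (M_n, id)` be the non-random Markov
chain Monte Carlo procedure where `M_n` is the Markov measure generated by the initial
distribution `μ_n` and the transition kernel
`K_n(x,dy) = A_n(x) R_n(x,dy) + (1 - A_n(x)) δ_x(dy)`.  If `(μ_n)` is tight and
`sup_{x ∈ K} R_n(x, B_ε(x)ᶜ) → 0` for every compact `K` and every `ε > 0`,
then `(𝓜_n)` is degenerate. -/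
theorem stmt2 {p : ℕ}
    (μ : ℕ → Measure (EuclideanSpace ℝ (Fin p)))
    (hμ : ∀ n, IsProbabilityMeasure (μ n))
    (R : ℕ → Kernel (EuclideanSpace ℝ (Fin p)) (EuclideanSpace ℝ (Fin p)))
    (hR : ∀ n, IsMarkovKernel (R n))
    (A : ℕ → EuclideanSpace ℝ (Fin p) → ℝ)
    (hAmeas : ∀ n, Measurable (A n))
    (hA01 : ∀ n x, A n x ∈ Set.Ioo (0 : ℝ) 1)
    (K : ℕ → Kernel (EuclideanSpace ℝ (Fin p)) (EuclideanSpace ℝ (Fin p)))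
    (hK : ∀ n, IsMarkovKernel (K n))
    (hKdef : ∀ n x, (K n) x
      = ENNReal.ofReal (A n x) • (R n) x
        + ENNReal.ofReal (1 - A n x) • Measure.dirac x)
    (M : ℕ → Measure (ℕ → EuclideanSpace ℝ (Fin p)))
    (hMarkov : ∀ n, IsMarkovMeasureF (M n) (μ n) (fun x => (K n) x))
    (htight : TightSeq μ)
    (hRsup : ∀ Kc : Set (EuclideanSpace ℝ (Fin p)), IsCompact Kc →
      ∀ ε : ℝ, 0 < ε →
        Tendsto (fun n => ⨆ x ∈ Kc, (R n) x (Metric.ball x ε)ᶜ) atTop (𝓝 (0 : ℝ≥0∞))) :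
    ∀ m : ℕ, 1 ≤ m →
      Tendsto (fun n => ∫ s, blDist (empMeas m s) (empMeas 1 s) ∂(M n))
        atTop (𝓝 0) :=
  stmt2_general μ hμ R A hA01 K hKdef M hMarkov htight hRsup
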